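/- arXiv:1610.02071 — 3 statements merged into one kernel-verified Lean document; each statement's English description precedes it below -/
import Mathlib

section
/- With the notation above, if lim_n (1/n) log E[e^{n⟨x*,X_n⟩}] = G(x*) and lim_n (1/n) log E[e^{n⟨x*,X_n⟩ + nφ_m(Y_n)}] = G(x*) + J(φ_m), where J(φ_m) = sup_{z∈Y}(φ_m(z) − I_Y(z)) ≥ φ_m(y) − I_Y(y) = −I_Y(y) for a point y with φ(y) = 1, then limsup_n (1/n) log P̃(Y_n ∈ Δ₂ᶜ) ≤ −m + I_Y(y). In particular this bound tends to −∞ as m → ∞. -/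
open MeasureTheory Real Filter

/-!
On `Δ₂ᶜ` the tilt `φ_m` equals `-m`, so on the event `{Y_n ∈ Δ₂ᶜ}` the density of `P̃` is
`e^{n⟨x*,X_n⟩ - nm - nL_n}`. Integrating over the whole space instead gives
`(1/n) log P̃(Y_n ∈ Δ₂ᶜ) ≤ ℓ_n - m - L_n`, whose limit is `G - m - (G + J(φ_m)) = -m - J(φ_m)`,
and `J(φ_m) ≥ φ_m(y) - I_Y(y) = -I_Y(y)`.
-/

theorem EReal.neg_toReal_le_of_zero_sub_le {a : EReal} (ha : a ≠ ⊤) {b : ℝ}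
    (h : 0 - a ≤ b) : -a.toReal ≤ b := by
  induction a with
  | bot => simp at h
  | top => exact absurd rfl ha
  | coe a => exact_mod_cast (zero_sub (a : EReal) ▸ h)

theorem EReal.one_div_mul_log_le_of_le_ofReal_exp {t : ℝ} (ht : 0 < t) {x : ENNReal} {b : ℝ}
    (hx : x ≤ ENNReal.ofReal (Real.exp (t * b))) : ((1 / t : ℝ) : EReal) * ENNReal.log x ≤ b := by
  have hlog : ENNReal.log x ≤ ((t * b : ℝ) : EReal) := by
    simpa [ENNReal.log_ofReal_of_pos (Real.exp_pos _)] using ENNReal.log_monotone hx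
  calc ((1 / t : ℝ) : EReal) * ENNReal.log x ≤ ((1 / t : ℝ) : EReal) * ((t * b : ℝ) : EReal) :=
        mul_le_mul_of_nonneg_left hlog (by exact_mod_cast (one_div_pos.2 ht).le)
    _ = b := by rw [← EReal.coe_mul]; congr 1; field_simp

section Tilting

variable {Ω : Type*} [MeasurableSpace Ω] {μ : Measure Ω}

theorem integrable_exp_of_le [IsFiniteMeasure μ] {f : Ω → ℝ} (hf : AEMeasurable f μ) {C : ℝ}
    (hfC : ∀ ω, f ω ≤ C) : Integrable (fun ω => exp (f ω)) μ :=
  Integrable.of_bound hf.exp.aestronglyMeasurable (exp C) <| .of_forall fun ω => by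
    rw [norm_of_nonneg (exp_pos _).le]
    exact exp_le_exp.2 (hfC ω)

theorem withDensity_ofReal_exp_add_apply_le {f g : Ω → ℝ} {A : Set Ω} (hA : MeasurableSet A)
    {c : ℝ} (hg : ∀ ω ∈ A, g ω = c) (hf : Integrable (fun ω => exp (f ω)) μ) :
    μ.withDensity (fun ω => ENNReal.ofReal (exp (f ω + g ω))) A
      ≤ ENNReal.ofReal (exp c * ∫ ω, exp (f ω) ∂μ) := by
  rw [withDensity_apply _ hA, ENNReal.ofReal_mul (exp_pos _).le,
    ofReal_integral_eq_lintegral_ofReal hf (.of_forall fun ω => (exp_pos _).le),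
    ← lintegral_const_mul' _ _ ENNReal.ofReal_ne_top]
  calc ∫⁻ ω in A, ENNReal.ofReal (exp (f ω + g ω)) ∂μ
      = ∫⁻ ω in A, ENNReal.ofReal (exp c) * ENNReal.ofReal (exp (f ω)) ∂μ := by
        refine setLIntegral_congr_fun hA fun ω hω => ?_
        rw [hg ω hω, ← ENNReal.ofReal_mul (exp_pos _).le, ← exp_add, add_comm]
    _ ≤ _ := setLIntegral_le_lintegral _ _

theorem one_div_mul_log_withDensity_exp_le {t : ℝ} (ht : 0 < t) {S V : Ω → ℝ}
    (hS : Integrable (fun ω => exp (t * S ω)) μ) [NeZero μ] {A : Set Ω} (hA : MeasurableSet A)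
    {m L : ℝ} (hV : ∀ ω ∈ A, V ω = -m) :
    ((1 / t : ℝ) : EReal) * ENNReal.log
        (μ.withDensity (fun ω => ENNReal.ofReal (exp (t * S ω + t * V ω - t * L))) A)
      ≤ (((1 / t) * log (∫ ω, exp (t * S ω) ∂μ) - m - L : ℝ) : EReal) := by
  refine EReal.one_div_mul_log_le_of_le_ofReal_exp ht ?_
  have hmgf : ∫ ω, exp (t * S ω) ∂μ = exp (t * ((1 / t) * log (∫ ω, exp (t * S ω) ∂μ))) := by
    rw [← mul_assoc, mul_one_div_cancel ht.ne', one_mul, exp_log (integral_exp_pos hS)]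
  simp_rw [add_sub_assoc]
  refine (withDensity_ofReal_exp_add_apply_le (c := t * -m - t * L) hA
    (fun ω hω => by rw [hV ω hω]) hS).trans_eq ?_
  conv_lhs => rw [hmgf, ← exp_add]
  ring_nf

end Tilting

theorem stmt7_general {Ω : Type*} [MeasurableSpace Ω] (P : Measure Ω) [IsProbabilityMeasure P]
    {X : Type*} [AddCommGroup X] [Module ℝ X] [TopologicalSpace X]
    {Y : Type*} [MeasurableSpace Y]
    (Xn : ℕ → Ω → X) (Yn : ℕ → Ω → Y) (hYn : ∀ n, Measurable (Yn n))
    (xs : X →L[ℝ] ℝ) (hXn : ∀ n, Measurable fun ω => xs (Xn n ω))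
    (C : ℝ) (hbd : ∀ n ω, |xs (Xn n ω)| ≤ C)
    (φ : Y → ℝ)
    (y : Y) (hφy : φ y = 1)
    (Δ₂ : Set Y) (hΔ₂ : MeasurableSet Δ₂) (hφ0 : ∀ z ∉ Δ₂, φ z = 0)
    (m : ℝ)
    (φm : Y → ℝ) (hφm : ∀ z, φm z = m * (φ z - 1))
    (IY : Y → EReal) (hIYy : IY y ≠ ⊤)
    (Gx Jm : ℝ)
    (hJm : (Jm : EReal) = ⨆ z : Y, ((φm z : EReal) - IY z))
    (ℓn : ℕ → ℝ)
    (hℓn : ∀ n, ℓn n = (1 / (n : ℝ)) * Real.log (∫ ω, Real.exp (n * xs (Xn n ω)) ∂P))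
    (hℓlim : Tendsto ℓn atTop (nhds Gx))
    (Ln : ℕ → ℝ)
    (hLlim : Tendsto Ln atTop (nhds (Gx + Jm)))
    (Ptilde : ℕ → Measure Ω)
    (hPtilde : ∀ n, Ptilde n = P.withDensity
      (fun ω => ENNReal.ofReal (Real.exp (n * xs (Xn n ω) + n * φm (Yn n ω) - n * Ln n)))) :
    Filter.limsup
        (fun n : ℕ => ((1 / (n : ℝ) : ℝ) : EReal) * ENNReal.log ((Ptilde n) {ω | Yn n ω ∈ Δ₂ᶜ}))
        atTop
      ≤ ((-m + (IY y).toReal : ℝ) : EReal) := by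
  have hJ : -(IY y).toReal ≤ Jm := EReal.neg_toReal_le_of_zero_sub_le hIYy <|
    hJm ▸ le_iSup_of_le (f := fun z => ((φm z : EReal) - IY z)) y (by simp [hφm, hφy])
  have hbound : ∀ᶠ n : ℕ in atTop,
      ((1 / (n : ℝ) : ℝ) : EReal) * ENNReal.log ((Ptilde n) {ω | Yn n ω ∈ Δ₂ᶜ})
        ≤ ((ℓn n - m - Ln n : ℝ) : EReal) := by
    filter_upwards [eventually_gt_atTop 0] with n hn
    rw [hPtilde, hℓn]
    exact one_div_mul_log_withDensity_exp_le (by positivity)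
      (integrable_exp_of_le ((hXn n).const_mul _).aemeasurable
        fun ω => mul_le_mul_of_nonneg_left (abs_le.1 (hbd n ω)).2 n.cast_nonneg)
      (hYn n hΔ₂.compl) fun ω hω => by simp [hφm, hφ0 _ hω]
  have hlim : Tendsto (fun n => ((ℓn n - m - Ln n : ℝ) : EReal)) atTop (nhds ((-m - Jm : ℝ) : EReal)) :=
    EReal.tendsto_coe.2 <| by
      convert (hℓlim.sub_const m).sub hLlim using 2
      ring
  calc _ ≤ limsup (fun n => ((ℓn n - m - Ln n : ℝ) : EReal)) atTop := limsup_le_limsup hbound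
    _ = ((-m - Jm : ℝ) : EReal) := hlim.limsup_eq
    _ ≤ ((-m + (IY y).toReal : ℝ) : EReal) := EReal.coe_le_coe_iff.2 (by linarith)

/-- If `(1/n) log E[e^{n⟨x*,X_n⟩}] → G(x*)` and
`(1/n) log E[e^{n⟨x*,X_n⟩+nφ_m(Y_n)}] → G(x*) + J(φ_m)` with
`J(φ_m) = sup_z (φ_m(z) − I_Y(z)) ≥ −I_Y(y)` (where `φ(y) = 1`), then
`limsup (1/n) log P̃(Y_n ∈ Δ₂ᶜ) ≤ −m + I_Y(y)`. -/
theorem stmt7 {Ω : Type*} [MeasurableSpace Ω] (P : Measure Ω) [IsProbabilityMeasure P]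
    {X : Type*} [AddCommGroup X] [Module ℝ X] [TopologicalSpace X]
    [IsTopologicalAddGroup X] [ContinuousSMul ℝ X]
    {Y : Type*} [TopologicalSpace Y] [MeasurableSpace Y] [BorelSpace Y]
    (Xn : ℕ → Ω → X) (Yn : ℕ → Ω → Y) (hYn : ∀ n, Measurable (Yn n))
    (xs : X →L[ℝ] ℝ) (hXn : ∀ n, Measurable fun ω => xs (Xn n ω))
    (C : ℝ) (hbd : ∀ n ω, |xs (Xn n ω)| ≤ C)
    (φ : Y → ℝ) (hφcont : Continuous φ) (hφ01 : ∀ z, φ z ∈ Set.Icc (0 : ℝ) 1)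
    (y : Y) (hφy : φ y = 1)
    (Δ₂ : Set Y) (hΔ₂ : MeasurableSet Δ₂) (hφ0 : ∀ z ∉ Δ₂, φ z = 0)
    (m : ℝ) (hm : 0 < m)
    (φm : Y → ℝ) (hφm : ∀ z, φm z = m * (φ z - 1))
    (IY : Y → EReal) (hIY0 : ∀ z, 0 ≤ IY z) (hIYy : IY y ≠ ⊤)
    (Gx Jm : ℝ)
    (hJm : (Jm : EReal) = ⨆ z : Y, ((φm z : EReal) - IY z))
    (ℓn : ℕ → ℝ)
    (hℓn : ∀ n, ℓn n = (1 / (n : ℝ)) * Real.log (∫ ω, Real.exp (n * xs (Xn n ω)) ∂P))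
    (hℓlim : Tendsto ℓn atTop (nhds Gx))
    (Ln : ℕ → ℝ)
    (hLn : ∀ n, Ln n = (1 / (n : ℝ)) *
      Real.log (∫ ω, Real.exp (n * xs (Xn n ω) + n * φm (Yn n ω)) ∂P))
    (hLlim : Tendsto Ln atTop (nhds (Gx + Jm)))
    (Ptilde : ℕ → Measure Ω)
    (hPtilde : ∀ n, Ptilde n = P.withDensity
      (fun ω => ENNReal.ofReal (Real.exp (n * xs (Xn n ω) + n * φm (Yn n ω) - n * Ln n)))) :
    Filter.limsup
        (fun n : ℕ => ((1 / (n : ℝ) : ℝ) : EReal) * ENNReal.log ((Ptilde n) {ω | Yn n ω ∈ Δ₂ᶜ}))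
        atTop
      ≤ ((-m + (IY y).toReal : ℝ) : EReal) :=
  stmt7_general P Xn Yn hYn xs hXn C hbd φ y hφy Δ₂ hΔ₂ hφ0 m φm hφm IY hIYy Gx Jm hJm ℓn hℓn hℓlim
    Ln hLlim Ptilde hPtilde
end

section
/- Let μ_V be a probability measure on [α⁻,α⁺] and let μ be a measure on [α⁻,α⁺] with dμ = h dμ_V where h is continuous and strictly positive. Set f = 1 − h^{−1}, which is continuous with sup f < 1. Then for any finite measure ν ≠ μ on [α⁻,α⁺] absolutely continuous with respect to μ_V with continuous density, the reversed Kullback–Leibler functional K(ν) = −∫ log(dν/dμ_V) dμ_V + ν([α⁻,α⁺]) − 1 satisfies K(μ) − ∫ f dμ < K(ν) − ∫ f dν; i.e., μ is an exposed point of K with exposing hyperplane f. -/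
open MeasureTheory Real Set

/-! Writing `dν = g dμ_V` and `dμ = h dμ_V`, one computes
`(K(ν) - ⟨f, ν⟩) - (K(μ) - ⟨f, μ⟩) = ∫ (g/h - 1 - log (g/h)) dμ_V`.
The integrand is nonnegative since `log t ≤ t - 1`, with equality only at `t = 1`,
so the integral vanishes only if `g = h` almost everywhere, i.e. only if `ν = μ`. -/

lemma Real.log_sub_log_le_div_sub_one {a b : ℝ} (ha : 0 < a) (hb : 0 < b) :
    log a - log b ≤ a / b - 1 := by
  rw [← log_div ha.ne' hb.ne']
  exact log_le_sub_one_of_pos (div_pos ha hb)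

lemma Real.log_sub_log_lt_div_sub_one {a b : ℝ} (ha : 0 < a) (hb : 0 < b) (hab : a ≠ b) :
    log a - log b < a / b - 1 := by
  rw [← log_div ha.ne' hb.ne']
  exact log_lt_sub_one_of_pos (div_pos ha hb) (by rwa [Ne, div_eq_one_iff_eq hb.ne'])

lemma ContinuousOn.integrable_of_ae_mem {X : Type*} [MeasurableSpace X]
    [TopologicalSpace X] [OpensMeasurableSpace X] [T2Space X] {μ : Measure X}
    [IsFiniteMeasureOnCompacts μ] {K : Set X} {u : X → ℝ} (hK : IsCompact K)
    (hμK : ∀ᵐ x ∂μ, x ∈ K) (hu : ContinuousOn u K) : Integrable u μ := by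
  simpa [IntegrableOn, Measure.restrict_eq_self_of_ae_mem hμK] using
    hu.integrableOn_compact (μ := μ) hK

namespace MeasureTheory

variable {X : Type*} [MeasurableSpace X] {μ : Measure X}

lemma integral_withDensity_ofReal {u : X → ℝ} (hu : AEMeasurable u μ) (hu0 : 0 ≤ᵐ[μ] u)
    (w : X → ℝ) :
    ∫ x, w x ∂μ.withDensity (fun x => ENNReal.ofReal (u x)) = ∫ x, u x * w x ∂μ := by
  rw [integral_withDensity_eq_integral_toReal_smul₀ hu.ennreal_ofReal
    (ae_of_all _ fun _ => ENNReal.ofReal_lt_top)]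
  refine integral_congr_ae ?_
  filter_upwards [hu0] with x hx
  simp [ENNReal.toReal_ofReal hx]

lemma withDensity_ofReal_apply_toReal {u : X → ℝ} (hu : Integrable u μ) (hu0 : 0 ≤ᵐ[μ] u)
    {s : Set X} (hs : MeasurableSet s) :
    (μ.withDensity (fun x => ENNReal.ofReal (u x)) s).toReal = ∫ x in s, u x ∂μ := by
  have hu0s : 0 ≤ᵐ[μ.restrict s] u := ae_restrict_of_ae hu0
  rw [withDensity_apply _ hs, ← ofReal_integral_eq_lintegral_ofReal hu.restrict hu0s,
    ENNReal.toReal_ofReal (integral_nonneg_of_ae hu0s)]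

lemma integral_one_sub_inv_withDensity {g h : X → ℝ} (hg : Integrable g μ)
    (hg0 : 0 ≤ᵐ[μ] g) (hgh : Integrable (fun x => g x / h x) μ) :
    ∫ x, (1 - 1 / h x) ∂μ.withDensity (fun x => ENNReal.ofReal (g x)) =
      ∫ x, g x ∂μ - ∫ x, g x / h x ∂μ := by
  rw [integral_withDensity_ofReal hg.aemeasurable hg0, ← integral_sub hg hgh]
  simp only [mul_sub, mul_one, mul_one_div]

lemma integral_log_sub_integral_log_lt [IsProbabilityMeasure μ] {g h : X → ℝ}
    (hg0 : ∀ᵐ x ∂μ, 0 < g x) (hh0 : ∀ᵐ x ∂μ, 0 < h x)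
    (hlg : Integrable (fun x => log (g x)) μ) (hlh : Integrable (fun x => log (h x)) μ)
    (hgh : Integrable (fun x => g x / h x) μ) (hne : ¬ g =ᵐ[μ] h) :
    ∫ x, log (g x) ∂μ - ∫ x, log (h x) ∂μ < ∫ x, g x / h x ∂μ - 1 := by
  set φ : X → ℝ := fun x => g x / h x - 1 - (log (g x) - log (h x))
  have hφ : Integrable φ μ := (hgh.sub (integrable_const 1)).sub (hlg.sub hlh)
  have hφ0 : 0 ≤ᵐ[μ] φ := by
    filter_upwards [hg0, hh0] with x hg hh
    exact sub_nonneg.2 (log_sub_log_le_div_sub_one hg hh)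
  have hφ_ne : ¬ φ =ᵐ[μ] 0 := fun hφ_eq => hne <| by
    filter_upwards [hφ_eq, hg0, hh0] with x hx hg hh
    by_contra hgh
    exact (sub_pos.2 (log_sub_log_lt_div_sub_one hg hh hgh)).ne' hx
  have hpos : 0 < ∫ x, φ x ∂μ := (integral_nonneg_of_ae hφ0).lt_of_ne fun h0 =>
    hφ_ne ((integral_eq_zero_iff_of_nonneg_ae hφ0 hφ).1 h0.symm)
  simp only [φ] at hpos
  rw [integral_sub (by exact hgh.sub (integrable_const 1)) (by exact hlg.sub hlh),
    integral_sub hgh (integrable_const 1), integral_sub hlg hlh, integral_const] at hpos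
  simp only [probReal_univ, smul_eq_mul, mul_one] at hpos
  linarith

end MeasureTheory

/-- With `dμ = h dμ_V`, `h` continuous and strictly positive, and
`f = 1 − 1/h` (continuous with `sup f < 1`), the reversed KL functional
`K(ν) = −∫ log(dν/dμ_V) dμ_V + ν([α⁻,α⁺]) − 1` satisfies
`K(μ) − ∫ f dμ < K(ν) − ∫ f dν` for every `ν ≠ μ` with continuous strictly positive
density `g` w.r.t. `μ_V`; i.e. `μ` is an exposed point of `K` with exposing hyperplane `f`. -/
theorem stmt10 (am ap : ℝ) (ham : am ≤ ap)
    (μV : Measure ℝ) [IsProbabilityMeasure μV] (hsupp : μV (Set.Icc am ap)ᶜ = 0)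
    (h g : ℝ → ℝ)
    (hh : ContinuousOn h (Set.Icc am ap)) (hhpos : ∀ x ∈ Set.Icc am ap, 0 < h x)
    (hgc : ContinuousOn g (Set.Icc am ap)) (hgpos : ∀ x ∈ Set.Icc am ap, 0 < g x)
    (μ ν : Measure ℝ)
    (hμ : μ = μV.withDensity fun x => ENNReal.ofReal (h x))
    (hν : ν = μV.withDensity fun x => ENNReal.ofReal (g x))
    (hne : ν ≠ μ)
    (f : ℝ → ℝ) (hf : ∀ x, f x = 1 - 1 / h x)
    (Kμ Kν : ℝ)
    (hKμ : Kμ = -∫ x, Real.log (h x) ∂μV + (μ (Set.Icc am ap)).toReal - 1)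
    (hKν : Kν = -∫ x, Real.log (g x) ∂μV + (ν (Set.Icc am ap)).toReal - 1) :
    ContinuousOn f (Set.Icc am ap) ∧ sSup (f '' Set.Icc am ap) < 1 ∧
      Kμ - ∫ x, f x ∂μ < Kν - ∫ x, f x ∂ν := by
  obtain rfl : f = fun x => 1 - 1 / h x := funext hf
  have hS : ∀ᵐ x ∂μV, x ∈ Icc am ap := ae_iff.2 hsupp
  have hres : μV.restrict (Icc am ap) = μV := Measure.restrict_eq_self_of_ae_mem hS
  have hint {u : ℝ → ℝ} (hu : ContinuousOn u (Icc am ap)) : Integrable u μV :=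
    hu.integrable_of_ae_mem isCompact_Icc hS
  have hh0 : ∀ᵐ x ∂μV, 0 < h x := hS.mono hhpos
  have hg0 : ∀ᵐ x ∂μV, 0 < g x := hS.mono hgpos
  have hh_ne (x) (hx : x ∈ Icc am ap) : h x ≠ 0 := (hhpos x hx).ne'
  have hfc : ContinuousOn (fun x => 1 - 1 / h x) (Icc am ap) :=
    continuousOn_const.sub (continuousOn_const.div hh hh_ne)
  refine ⟨hfc, (isCompact_Icc.sSup_lt_iff_of_continuous (nonempty_Icc.2 ham) hfc 1).2
    fun x hx => sub_lt_self 1 (one_div_pos.2 (hhpos x hx)), ?_⟩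
  have hh0' : 0 ≤ᵐ[μV] h := hh0.mono fun _ => le_of_lt
  have hg0' : 0 ≤ᵐ[μV] g := hg0.mono fun _ => le_of_lt
  have hμS : (μ (Icc am ap)).toReal = ∫ x, h x ∂μV := by
    rw [hμ, withDensity_ofReal_apply_toReal (hint hh) hh0' measurableSet_Icc, hres]
  have hνS : (ν (Icc am ap)).toReal = ∫ x, g x ∂μV := by
    rw [hν, withDensity_ofReal_apply_toReal (hint hgc) hg0' measurableSet_Icc, hres]
  have hfμ : ∫ x, 1 - 1 / h x ∂μ = ∫ x, h x ∂μV - 1 := by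
    rw [hμ, integral_one_sub_inv_withDensity (hint hh) hh0' (hint (hh.div hh hh_ne)),
      integral_congr_ae (hh0.mono fun x hx => div_self hx.ne'), integral_const]
    simp
  have hfν : ∫ x, 1 - 1 / h x ∂ν = ∫ x, g x ∂μV - ∫ x, g x / h x ∂μV := by
    rw [hν]
    exact integral_one_sub_inv_withDensity (hint hgc) hg0' (hint (hgc.div hh hh_ne))
  have hgap := integral_log_sub_integral_log_lt hg0 hh0
    (hint (hgc.log fun x hx => (hgpos x hx).ne')) (hint (hh.log hh_ne)) (hint (hgc.div hh hh_ne))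
    fun hgh => hne (by rw [hν, hμ]; exact withDensity_congr_ae (hgh.fun_comp ENNReal.ofReal))
  beta_reduce
  rw [hKμ, hKν, hμS, hνS, hfμ, hfν]
  linarith
end

section
/- Let I_Y : Y → [0,∞] be a function on a topological space Y and define J(φ) = sup_{y∈Y}(φ(y) − I_Y(y)) for bounded continuous φ. Then the double Legendre transform recovers the lower semicontinuous envelope from below: for every y ∈ Y, sup_{φ ∈ C_b(Y)} (φ(y) − J(φ)) ≤ I_Y(y), with equality if I_Y is lower semicontinuous and Y is a completely regular (e.g. metric) space. -/
/-!
Fenchel–Young gives `φ y - J φ ≤ I_Y y` for every `φ`, whence the inequality. For the reverse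
inequality it suffices, for each real `z < I_Y y`, to find a bounded continuous `φ ≤ I_Y` with
`z ≤ φ y`, since then `J φ ≤ 0`. Such a `φ` is `c - (c - m) f` with `c = max z m`, where `m` is a
lower bound of `I_Y` and `f : Y → [0, 1]` is an Urysohn function that vanishes at `y` and equals
`1` off the open set `{z < I_Y}` (open by lower semicontinuity).
-/

open BoundedContinuousFunction

lemma EReal.coe_sub_le_of_coe_sub_le {a : ℝ} {b c : EReal} (h : (a : EReal) - b ≤ c) :
    (a : EReal) - c ≤ b := by
  induction b using EReal.rec with
  | bot => simp_all
  | top => exact le_top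
  | coe b =>
    refine EReal.sub_le_of_le_add ?_
    rw [add_comm]
    exact (EReal.sub_le_iff_le_add (.inl (EReal.coe_ne_bot b)) (.inl (EReal.coe_ne_top b))).1 h

section Legendre

variable {Y : Type*} (I : Y → EReal)

lemma coe_sub_iSup_coe_sub_le (φ : Y → ℝ) (y : Y) :
    (φ y : EReal) - ⨆ x, ((φ x : EReal) - I x) ≤ I y :=
  EReal.coe_sub_le_of_coe_sub_le <| le_iSup (fun x ↦ (φ x : EReal) - I x) y

lemma iSup_coe_sub_nonpos {φ : Y → ℝ} (h : ∀ x, (φ x : EReal) ≤ I x) :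
    ⨆ x, ((φ x : EReal) - I x) ≤ 0 :=
  iSup_le fun x ↦ EReal.sub_nonpos.2 (h x)

end Legendre

lemma LowerSemicontinuous.exists_boundedContinuous_le_of_lt {Y : Type*} [TopologicalSpace Y]
    [CompletelyRegularSpace Y] {I : Y → EReal} (hI : LowerSemicontinuous I) {m : ℝ}
    (hm : ∀ x, (m : EReal) ≤ I x) {y : Y} {z : ℝ} (hz : z < I y) :
    ∃ φ : Y →ᵇ ℝ, (∀ x, (φ x : EReal) ≤ I x) ∧ z ≤ φ y := by
  obtain ⟨f, hf, hfy, hfK⟩ := CompletelyRegularSpace.completely_regular y _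
    (hI.isOpen_preimage z).isClosed_compl (Set.notMem_compl_iff.2 hz)
  set c := max z m
  let g : Y →ᵇ ℝ := (mkOfCompact ⟨Subtype.val, continuous_subtype_val⟩).compContinuous ⟨f, hf⟩
  refine ⟨const Y c - (c - m) • g, fun x ↦ ?_, by simp [g, hfy, c]⟩
  by_cases hx : (z : EReal) < I x
  · calc ((const Y c - (c - m) • g) x : EReal) ≤ c := by
          have : 0 ≤ (c - m) * f x := mul_nonneg (sub_nonneg.2 (le_max_right z m)) (f x).2.1
          exact EReal.coe_le_coe_iff.2 (by simpa [g] using this)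
      _ = max (z : EReal) m := EReal.coe_strictMono.monotone.map_max
      _ ≤ I x := max_le hx.le (hm x)
  · have : f x = 1 := hfK hx
    simpa [g, this] using hm x

theorem stmt19_general {Y : Type*} [TopologicalSpace Y] [CompletelyRegularSpace Y]
    (IY : Y → EReal) (hIY0 : ∀ y, 0 ≤ IY y)
    (J : BoundedContinuousFunction Y ℝ → EReal)
    (hJ : ∀ φ : BoundedContinuousFunction Y ℝ, J φ = ⨆ y : Y, ((φ y : EReal) - IY y)) :
    (∀ y : Y, (⨆ φ : BoundedContinuousFunction Y ℝ, ((φ y : EReal) - J φ)) ≤ IY y) ∧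
      (LowerSemicontinuous IY →
        ∀ y : Y, (⨆ φ : BoundedContinuousFunction Y ℝ, ((φ y : EReal) - J φ)) = IY y) := by
  have hle : ∀ y, (⨆ φ : Y →ᵇ ℝ, ((φ y : EReal) - J φ)) ≤ IY y := fun y ↦
    iSup_le fun φ ↦ hJ φ ▸ coe_sub_iSup_coe_sub_le IY φ y
  refine ⟨hle, fun hIY y ↦ le_antisymm (hle y) (EReal.ge_of_forall_gt_iff_ge.1 fun z hz ↦ ?_)⟩
  obtain ⟨φ, hφI, hzφ⟩ :=
    hIY.exists_boundedContinuous_le_of_lt (m := 0) (by exact_mod_cast hIY0) hz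
  calc (z : EReal) ≤ φ y - 0 := by rw [sub_zero]; exact_mod_cast hzφ
    _ ≤ φ y - J φ := EReal.sub_le_sub le_rfl (hJ φ ▸ iSup_coe_sub_nonpos IY hφI)
    _ ≤ ⨆ ψ : Y →ᵇ ℝ, ((ψ y : EReal) - J ψ) := le_iSup (fun ψ : Y →ᵇ ℝ ↦ (ψ y : EReal) - J ψ) φ

/-- For `I_Y : Y → [0,∞]` not identically `+∞` on a completely regular
Hausdorff space and `J(φ) = sup_y (φ(y) − I_Y(y))` for bounded continuous `φ`, one has
`sup_{φ ∈ C_b(Y)} (φ(y) − J(φ)) ≤ I_Y(y)` for every `y`, with equality if `I_Y` is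
lower semicontinuous. -/
theorem stmt19 {Y : Type*} [TopologicalSpace Y] [T2Space Y] [CompletelyRegularSpace Y]
    (IY : Y → EReal) (hIY0 : ∀ y, 0 ≤ IY y) (hIYne : ∃ y, IY y ≠ ⊤)
    (J : BoundedContinuousFunction Y ℝ → EReal)
    (hJ : ∀ φ : BoundedContinuousFunction Y ℝ, J φ = ⨆ y : Y, ((φ y : EReal) - IY y)) :
    (∀ y : Y, (⨆ φ : BoundedContinuousFunction Y ℝ, ((φ y : EReal) - J φ)) ≤ IY y) ∧
      (LowerSemicontinuous IY →
        ∀ y : Y, (⨆ φ : BoundedContinuousFunction Y ℝ, ((φ y : EReal) - J φ)) = IY y) :=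
  stmt19_general IY hIY0 J hJ
end
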